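/- arXiv:1206.6089 — 3 statements merged into one kernel-verified Lean document; each statement's English description precedes it below -/
import Mathlib

section
/- Let A₁, A₂, A₃, A₄ > 0. Suppose y : [0,∞) → ℝ is nonnegative, continuous, and differentiable on (0,∞), h : [0,∞) → ℝ is nonnegative and continuous, and they satisfy y'(t) ≤ A₁·y(t)² + A₂ + h(t) for all t > 0, together with ∫₀^∞ y(t) dt ≤ A₃ and ∫₀^∞ h(t) dt ≤ A₄. Then y(t) → 0 as t → +∞. -/
open MeasureTheory Filter

/-!
The substitution `φ = arctan y` linearises the Riccati-type inequality: as
`(A₁ y² + A₂) / (1 + y²) ≤ max A₁ A₂` and `h ≥ 0`, it gives `φ' ≤ max A₁ A₂ + h`, hence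
`φ t ≤ φ s + max A₁ A₂ (t - s) + ∫ₛᵗ h` without any a priori bound on `y`.
Since `0 ≤ φ ≤ y` is integrable, far out every interval `(t - δ, t)` contains a point `s` where
`φ s` is small, and there the tail of `∫ h` is small as well; so `φ t → 0`, and `y = tan φ → 0`.
-/

open Set Real Topology

lemma Real.arctan_le_self {x : ℝ} (hx : 0 ≤ x) : arctan x ≤ x :=
  calc arctan x ≤ tan (arctan x) := le_tan (arctan_nonneg.2 hx) (arctan_lt_pi_div_two x)
    _ = x := tan_arctan x

lemma integrable_of_lintegral_ofReal_ne_top {α : Type*} [MeasurableSpace α] {μ : Measure α}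
    {f : α → ℝ} (hf : AEStronglyMeasurable f μ) (hf0 : 0 ≤ᵐ[μ] f)
    (hfin : ∫⁻ x, ENNReal.ofReal (f x) ∂μ ≠ ⊤) : Integrable f μ :=
  ⟨hf, (hasFiniteIntegral_iff_ofReal hf0).2 hfin.lt_top⟩

lemma tendsto_setIntegral_Ioi_atTop {E : Type*} [NormedAddCommGroup E] [NormedSpace ℝ E]
    {μ : Measure ℝ} {f : ℝ → E} {a : ℝ} (hf : IntegrableOn f (Ioi a) μ) :
    Tendsto (fun T => ∫ x in Ioi T, f x ∂μ) atTop (𝓝 0) := by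
  have hempty : ⋂ T : ℝ, Ioi T = ∅ := by
    ext x
    simpa using ⟨x, le_rfl⟩
  simpa [hempty] using tendsto_setIntegral_of_antitone (fun T => measurableSet_Ioi)
    (fun _ _ h => Ioi_subset_Ioi h) ⟨a, hf⟩

lemma exists_mem_Ioo_lt_of_integral_lt {f : ℝ → ℝ} {a b c : ℝ} (hab : a < b)
    (hf : IntegrableOn f (Ioo a b)) (hlt : ∫ x in Ioo a b, f x < c * (b - a)) :
    ∃ x ∈ Ioo a b, f x < c := by
  by_contra! hge
  have := setIntegral_ge_of_const_le_real measurableSet_Ioo measure_Ioo_lt_top.ne hge hf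
  rw [Real.volume_real_Ioo_of_le hab.le] at this
  linarith

lemma arctan_sub_arctan_le_of_deriv_le {y y' h : ℝ → ℝ} {A₁ A₂ a b : ℝ} (hab : a ≤ b)
    (hy : ContinuousOn y (Icc a b)) (hy' : ∀ x ∈ Ioo a b, HasDerivAt y (y' x) x)
    (hh : IntegrableOn h (Icc a b)) (hh0 : ∀ x ∈ Ioo a b, 0 ≤ h x)
    (hle : ∀ x ∈ Ioo a b, y' x ≤ A₁ * y x ^ 2 + A₂ + h x) :
    arctan (y b) - arctan (y a) ≤ max A₁ A₂ * (b - a) + ∫ x in a..b, h x := by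
  have hbound : ∀ x ∈ Ioo a b, 1 / (1 + y x ^ 2) * y' x ≤ max A₁ A₂ + h x := by
    intro x hx
    have hq : 0 ≤ y x ^ 2 := sq_nonneg _
    rw [one_div_mul_eq_div, div_le_iff₀ (by positivity)]
    nlinarith [le_max_left A₁ A₂, le_max_right A₁ A₂, hle x hx, hh0 x hx,
      mul_le_mul_of_nonneg_right (le_max_left A₁ A₂) hq, mul_nonneg (hh0 x hx) hq]
  have key : arctan (y b) - arctan (y a) ≤ ∫ x in a..b, (max A₁ A₂ + h x) :=
    intervalIntegral.sub_le_integral_of_hasDeriv_right_of_le hab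
    (continuous_arctan.comp_continuousOn hy) (fun x hx => (hy' x hx).arctan.hasDerivWithinAt)
    ((integrable_const (max A₁ A₂)).add hh) hbound
  rwa [intervalIntegral.integral_add intervalIntegrable_const
    ((intervalIntegrable_iff_integrableOn_Icc_of_le hab).2 hh), intervalIntegral.integral_const, smul_eq_mul,
    mul_comm] at key

lemma tendsto_zero_of_sub_le_mul_add_integral {φ h : ℝ → ℝ} {K a : ℝ}
    (hφ : IntegrableOn φ (Ioi a)) (hφ0 : ∀ t, a < t → 0 ≤ φ t)
    (hh : IntegrableOn h (Ioi a)) (hh0 : ∀ t, a < t → 0 ≤ h t)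
    (hφh : ∀ s t, a < s → s ≤ t → φ t - φ s ≤ K * (t - s) + ∫ x in s..t, h x) :
    Tendsto φ atTop (𝓝 0) := by
  rw [Metric.tendsto_atTop]
  intro ε hε
  obtain ⟨δ, hδ, hKδ⟩ := exists_pos_mul_lt (by positivity : 0 < ε / 3) |K|
  obtain ⟨T, hTa, hTφ, hTh⟩ : ∃ T, a ≤ T ∧ ∫ x in Ioi T, φ x < ε / 3 * δ ∧
      ∫ x in Ioi T, h x < ε / 3 :=
    ((eventually_ge_atTop a).and
      (((tendsto_setIntegral_Ioi_atTop hφ).eventually (gt_mem_nhds (by positivity))).and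
        ((tendsto_setIntegral_Ioi_atTop hh).eventually (gt_mem_nhds (by positivity))))).exists
  have tail_le : ∀ f : ℝ → ℝ, IntegrableOn f (Ioi a) → (∀ t, a < t → 0 ≤ f t) →
      ∀ s ⊆ Ioi T, ∫ x in s, f x ≤ ∫ x in Ioi T, f x := fun f hf hf0 s hs =>
    setIntegral_mono_set (hf.mono_set (Ioi_subset_Ioi hTa))
      ((ae_restrict_iff' measurableSet_Ioi).2 (ae_of_all _ fun t ht => hf0 t (hTa.trans_lt ht)))
      hs.eventuallyLE
  refine ⟨T + δ, fun t ht => ?_⟩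
  obtain ⟨s, ⟨hts, hst⟩, hφs⟩ : ∃ s ∈ Ioo (t - δ) t, φ s < ε / 3 := by
    refine exists_mem_Ioo_lt_of_integral_lt (by linarith)
      (hφ.mono_set fun x hx => mem_Ioi.2 (by linarith [hx.1])) ?_
    calc ∫ x in Ioo (t - δ) t, φ x ≤ ∫ x in Ioi T, φ x :=
          tail_le φ hφ hφ0 _ fun x hx => mem_Ioi.2 (by linarith [hx.1])
      _ < ε / 3 * (t - (t - δ)) := by rwa [sub_sub_cancel]
  have hK : K * (t - s) < ε / 3 :=
    calc K * (t - s) ≤ |K| * (t - s) := mul_le_mul_of_nonneg_right (le_abs_self K) (by linarith)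
      _ ≤ |K| * δ := mul_le_mul_of_nonneg_left (by linarith) (abs_nonneg K)
      _ < ε / 3 := hKδ
  have hhs : ∫ x in s..t, h x < ε / 3 := by
    rw [intervalIntegral.integral_of_le hst.le]
    exact (tail_le h hh hh0 _ fun x hx => mem_Ioi.2 (by linarith [hx.1])).trans_lt hTh
  have := hφh s t (by linarith) hst.le
  rw [Real.dist_eq, sub_zero, abs_of_nonneg (hφ0 t (by linarith))]
  linarith

theorem zheng_decay_lemma_general
    (A₁ A₂ A₃ A₄ : ℝ)
    (y h y' : ℝ → ℝ)
    (hy_nonneg : ∀ t, 0 ≤ t → 0 ≤ y t)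
    (hy_cont : ContinuousOn y (Set.Ici (0 : ℝ)))
    (hy_deriv : ∀ t, 0 < t → HasDerivAt y (y' t) t)
    (hh_nonneg : ∀ t, 0 ≤ t → 0 ≤ h t)
    (hh_cont : ContinuousOn h (Set.Ici (0 : ℝ)))
    (hineq : ∀ t, 0 < t → y' t ≤ A₁ * (y t) ^ 2 + A₂ + h t)
    (hy_int : ∫⁻ t in Set.Ioi (0 : ℝ), ENNReal.ofReal (y t) ≤ ENNReal.ofReal A₃)
    (hh_int : ∫⁻ t in Set.Ioi (0 : ℝ), ENNReal.ofReal (h t) ≤ ENNReal.ofReal A₄) :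
    Tendsto y atTop (nhds 0) := by
  have integrableOn_Ioi : ∀ {f : ℝ → ℝ} {A : ℝ}, (∀ t, 0 ≤ t → 0 ≤ f t) →
      ContinuousOn f (Ici 0) → ∫⁻ t in Ioi 0, ENNReal.ofReal (f t) ≤ ENNReal.ofReal A →
      IntegrableOn f (Ioi 0) := fun hf0 hf hfA =>
    integrable_of_lintegral_ofReal_ne_top
      ((hf.mono Ioi_subset_Ici_self).aestronglyMeasurable measurableSet_Ioi)
      ((ae_restrict_iff' measurableSet_Ioi).2 (ae_of_all _ fun t ht => hf0 t (le_of_lt ht)))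
      (ne_top_of_le_ne_top ENNReal.ofReal_ne_top hfA)
  have hy : IntegrableOn y (Ioi 0) := integrableOn_Ioi hy_nonneg hy_cont hy_int
  have hh : IntegrableOn h (Ioi 0) := integrableOn_Ioi hh_nonneg hh_cont hh_int
  have hφ : IntegrableOn (fun t => arctan (y t)) (Ioi 0) := by
    refine hy.mono' ((continuous_arctan.comp_continuousOn
      (hy_cont.mono Ioi_subset_Ici_self)).aestronglyMeasurable measurableSet_Ioi) ?_
    refine (ae_restrict_iff' measurableSet_Ioi).2 (ae_of_all _ fun t ht => ?_)
    have hyt := hy_nonneg t (le_of_lt ht)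
    rw [Real.norm_eq_abs, abs_of_nonneg (arctan_nonneg.2 hyt)]
    exact arctan_le_self hyt
  have hφ_lim : Tendsto (fun t => arctan (y t)) atTop (𝓝 0) := by
    refine tendsto_zero_of_sub_le_mul_add_integral (K := max A₁ A₂) hφ
      (fun t ht => arctan_nonneg.2 (hy_nonneg t ht.le)) hh (fun t ht => hh_nonneg t ht.le)
      fun s t hs hst => arctan_sub_arctan_le_of_deriv_le hst
        (hy_cont.mono fun x hx => hs.le.trans hx.1)
        (fun x hx => hy_deriv x (hs.trans hx.1))
        ((hh_cont.mono fun x hx => hs.le.trans hx.1).integrableOn_Icc)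
        (fun x hx => hh_nonneg x (hs.trans hx.1).le)
        (fun x hx => hineq x (hs.trans hx.1))
  simpa [Function.comp_def, tan_arctan] using
    (continuousAt_tan.2 (by simp)).tendsto.comp hφ_lim

/-- Lemma 4.2 (Zheng): if `y` is nonnegative, continuous on `[0,∞)`, differentiable on
`(0,∞)` with derivative `y'`, `h` is nonnegative and continuous on `[0,∞)`,
`y' t ≤ A₁ y(t)² + A₂ + h(t)` for `t > 0`, and `∫₀^∞ y ≤ A₃`, `∫₀^∞ h ≤ A₄`,
then `y(t) → 0` as `t → +∞`. -/
theorem zheng_decay_lemma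
    (A₁ A₂ A₃ A₄ : ℝ) (hA₁ : 0 < A₁) (hA₂ : 0 < A₂) (hA₃ : 0 < A₃) (hA₄ : 0 < A₄)
    (y h y' : ℝ → ℝ)
    (hy_nonneg : ∀ t, 0 ≤ t → 0 ≤ y t)
    (hy_cont : ContinuousOn y (Set.Ici (0 : ℝ)))
    (hy_deriv : ∀ t, 0 < t → HasDerivAt y (y' t) t)
    (hh_nonneg : ∀ t, 0 ≤ t → 0 ≤ h t)
    (hh_cont : ContinuousOn h (Set.Ici (0 : ℝ)))
    (hineq : ∀ t, 0 < t → y' t ≤ A₁ * (y t) ^ 2 + A₂ + h t)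
    (hy_int : ∫⁻ t in Set.Ioi (0 : ℝ), ENNReal.ofReal (y t) ≤ ENNReal.ofReal A₃)
    (hh_int : ∫⁻ t in Set.Ioi (0 : ℝ), ENNReal.ofReal (h t) ≤ ENNReal.ofReal A₄) :
    Tendsto y atTop (nhds 0) :=
  zheng_decay_lemma_general A₁ A₂ A₃ A₄ y h y' hy_nonneg hy_cont hy_deriv hh_nonneg hh_cont hineq
    hy_int hh_int
end

section
/- Let (X, 𝒜, μ) be a finite measure space, let L > 0 and m > 0, and let (fₙ)ₙ be a sequence of measurable functions on X with 0 ≤ fₙ ≤ L a.e. for every n. Suppose fₙ → f μ-almost everywhere, and that lim_{n→∞} ∫_{{fₙ > m}} fₙ dμ = 0. Then μ({x ∈ X : f(x) > m}) = 0. -/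
open MeasureTheory Filter Topology

/-!
On `{fₙ > m}` the integrand exceeds `m`, so `m · μ {fₙ > m} ≤ ∫_{fₙ > m} fₙ dμ → 0` and the
measures of the superlevel sets `{fₙ > m}` tend to zero. A point with `g x > m` at which
`fₙ x → g x` lies in `{fₙ > m}` for all large `n`, i.e. in `liminf {fₙ > m}`, and a set that is
eventually contained in sets of arbitrarily small measure is null.
-/

theorem MeasureTheory.measure_liminf_atTop_eq_zero_of_tendsto {α : Type*} [MeasurableSpace α]
    {μ : Measure α} {s : ℕ → Set α} (hs : Tendsto (fun n => μ (s n)) atTop (𝓝 0)) :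
    μ (liminf s atTop) = 0 := by
  rw [liminf_eq_iSup_iInf_of_nat]
  refine measure_iUnion_null fun n => ?_
  have h_le : ∀ᶠ k in atTop, μ (⨅ i ≥ n, s i) ≤ μ (s k) := by
    filter_upwards [eventually_ge_atTop n] with k hk
    exact measure_mono (Set.biInter_subset_of_mem hk)
  exact nonpos_iff_eq_zero.mp (ge_of_tendsto hs h_le)

theorem MeasureTheory.measure_setOf_lt_eq_zero_of_ae_tendsto {X β : Type*} [MeasurableSpace X] {μ : Measure X}
    [TopologicalSpace β] [LinearOrder β] [OrderClosedTopology β] {m : β}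
    {f : ℕ → X → β} {g : X → β}
    (hf_conv : ∀ᵐ x ∂μ, Tendsto (fun n => f n x) atTop (𝓝 (g x)))
    (hf_lt : Tendsto (fun n => μ {x | m < f n x}) atTop (𝓝 0)) :
    μ {x | m < g x} = 0 := by
  refine measure_mono_null_ae ?_ (measure_liminf_atTop_eq_zero_of_tendsto hf_lt)
  filter_upwards [hf_conv] with x hx hgx
  exact mem_liminf_iff_eventually_mem.mpr (hx.eventually_const_lt hgx)

theorem MeasureTheory.tendsto_measureReal_setOf_lt_of_tendsto_setIntegral {X : Type*}
    [MeasurableSpace X] {μ : Measure X} [IsFiniteMeasure μ] {m : ℝ} (hm : 0 < m)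
    {f : ℕ → X → ℝ} (hf_meas : ∀ n, Measurable (f n)) (hf_int : ∀ n, Integrable (f n) μ)
    (hint : Tendsto (fun n => ∫ x in {x | m < f n x}, f n x ∂μ) atTop (𝓝 0)) :
    Tendsto (fun n => μ.real {x | m < f n x}) atTop (𝓝 0) := by
  have h_markov : ∀ n, μ.real {x | m < f n x} ≤ m⁻¹ * ∫ x in {x | m < f n x}, f n x ∂μ :=
    fun n => (le_inv_mul_iff₀ hm).mpr <|
      setIntegral_ge_of_const_le_real (measurableSet_lt measurable_const (hf_meas n))
        (measure_ne_top μ _) (fun _ hx => le_of_lt hx) (hf_int n).integrableOn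
  refine tendsto_of_tendsto_of_tendsto_of_le_of_le tendsto_const_nhds ?_
    (fun n => measureReal_nonneg) h_markov
  simpa using hint.const_mul m⁻¹

theorem limit_stays_below_obstacle_general
    {X : Type*} [MeasurableSpace X] (μ : Measure X) [IsFiniteMeasure μ]
    (L m : ℝ) (hm : 0 < m)
    (f : ℕ → X → ℝ) (g : X → ℝ)
    (hf_meas : ∀ n, Measurable (f n))
    (hf_bdd : ∀ n, ∀ᵐ x ∂μ, 0 ≤ f n x ∧ f n x ≤ L)
    (hf_conv : ∀ᵐ x ∂μ, Tendsto (fun n => f n x) atTop (nhds (g x)))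
    (hint : Tendsto (fun n => ∫ x in {x | m < f n x}, f n x ∂μ) atTop (nhds 0)) :
    μ {x | m < g x} = 0 := by
  have hf_int : ∀ n, Integrable (f n) μ := fun n =>
    Integrable.of_bound (hf_meas n).aestronglyMeasurable L <| by
      filter_upwards [hf_bdd n] with x hx
      exact abs_le.mpr ⟨by linarith [hx.1, hx.2], hx.2⟩
  exact measure_setOf_lt_eq_zero_of_ae_tendsto hf_conv <| (ENNReal.tendsto_toReal_zero_iff).mp
    (tendsto_measureReal_setOf_lt_of_tendsto_setIntegral hm hf_meas hf_int hint)

/-- Measure-theoretic core of Lemma 2.4: on a finite measure space, if `0 ≤ fₙ ≤ L` a.e.,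
`fₙ → f` a.e., and `∫_{fₙ > m} fₙ dμ → 0`, then `μ {f > m} = 0`. -/
theorem limit_stays_below_obstacle
    {X : Type*} [MeasurableSpace X] (μ : Measure X) [IsFiniteMeasure μ]
    (L m : ℝ) (hL : 0 < L) (hm : 0 < m)
    (f : ℕ → X → ℝ) (g : X → ℝ)
    (hf_meas : ∀ n, Measurable (f n))
    (hf_bdd : ∀ n, ∀ᵐ x ∂μ, 0 ≤ f n x ∧ f n x ≤ L)
    (hf_conv : ∀ᵐ x ∂μ, Tendsto (fun n => f n x) atTop (nhds (g x)))
    (hint : Tendsto (fun n => ∫ x in {x | m < f n x}, f n x ∂μ) atTop (nhds 0)) :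
    μ {x | m < g x} = 0 :=
  limit_stays_below_obstacle_general μ L m hm f g hf_meas hf_bdd hf_conv hint
end

section
/- Let (X, 𝒜, μ) be a finite measure space, let B, L > 0, and let b : X → ℝ be measurable with 0 ≤ b ≤ B μ-a.e. Let u : X → ℝ be measurable with u ≥ 0 μ-a.e. and u ≤ 1 μ-a.e. on the set {b > 0}. Let (u_p)_{p∈ℕ} be a sequence of measurable functions with 0 ≤ u_p ≤ L μ-a.e. for every p, such that ∫_X |u_p − u| dμ → 0 as p → ∞. Then liminf_{p→∞} ∫_X b · u_p^p · (u_p − u) dμ ≥ 0. -/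
/-!
Pointwise, `b u_p^p (u_p - u) ≥ -B/(p+1)`: where `u_p ≥ u` the integrand is nonnegative, and
elsewhere `b > 0` forces `u_p < u ≤ 1`, so `u_p^p (u - u_p) ≤ u_p^p (1 - u_p) ≤ 1/(p+1)`.
Integrating over the finite measure space gives the lower bound `-B μ(X)/(p+1) → 0`.
-/

open MeasureTheory Filter Finset

lemma pow_mul_one_sub_le_one_div {K : Type*} [Field K] [LinearOrder K] [IsStrictOrderedRing K]
    (p : ℕ) {t : K} (h0 : 0 ≤ t) (h1 : t ≤ 1) : t ^ p * (1 - t) ≤ 1 / (p + 1) := by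
  have hgeom : ((p : K) + 1) * t ^ p ≤ ∑ k ∈ range (p + 1), t ^ k := by
    simpa using card_nsmul_le_sum (range (p + 1)) (t ^ ·) (t ^ p)
      fun k hk => pow_le_pow_of_le_one h0 h1 (Nat.lt_succ_iff.mp (mem_range.mp hk))
  rw [le_div_iff₀ (by positivity)]
  calc t ^ p * (1 - t) * (p + 1) = ((p : K) + 1) * t ^ p * (1 - t) := by ring
    _ ≤ (∑ k ∈ range (p + 1), t ^ k) * (1 - t) := by gcongr
    _ = 1 - t ^ (p + 1) := geom_sum_mul_neg t (p + 1)
    _ ≤ 1 := by linarith [pow_nonneg h0 (p + 1)]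

lemma neg_div_succ_le_mul_pow_mul_sub {b B t u : ℝ} (p : ℕ) (hb0 : 0 ≤ b) (hbB : b ≤ B)
    (ht : 0 ≤ t) (hu : 0 < b → u ≤ 1) : -(B / (p + 1)) ≤ b * t ^ p * (t - u) := by
  have hB : 0 ≤ B := hb0.trans hbB
  rcases le_or_gt u t with hut | htu
  · have := sub_nonneg.2 hut
    calc -(B / (p + 1)) ≤ 0 := by rw [neg_nonpos]; positivity
      _ ≤ b * t ^ p * (t - u) := by positivity
  rcases hb0.eq_or_lt with rfl | hb
  · simpa using div_nonneg hB (by positivity : (0 : ℝ) ≤ p + 1)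
  have ht1 : t ≤ 1 := htu.le.trans (hu hb)
  calc -(B / (p + 1)) = -(B * (1 / (p + 1))) := by ring
    _ ≤ -(b * (t ^ p * (1 - t))) := by
      have := sub_nonneg.2 ht1
      gcongr
      exact pow_mul_one_sub_le_one_div p ht ht1
    _ ≤ -(b * (t ^ p * (u - t))) := by gcongr; exact hu hb
    _ = b * t ^ p * (t - u) := by ring

-- No integrability is assumed: otherwise `∫ f = 0`, which is where `a ≤ 0` is needed.
lemma MeasureTheory.mul_measureReal_univ_le_integral {X : Type*} [MeasurableSpace X]
    {μ : Measure X} [IsFiniteMeasure μ] {f : X → ℝ} {a : ℝ} (ha : a ≤ 0)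
    (hf : ∀ᵐ x ∂μ, a ≤ f x) : a * μ.real Set.univ ≤ ∫ x, f x ∂μ := by
  by_cases hfi : Integrable f μ
  · simpa [mul_comm] using integral_mono_ae (integrable_const a) hfi hf
  · rw [integral_undef hfi]
    exact mul_nonpos_of_nonpos_of_nonneg ha measureReal_nonneg

-- If `v` tends to `+∞` along `l`, its liminf in `ℝ` is the junk value `0`.
lemma Real.le_liminf_of_tendsto_of_eventually_le {ι : Type*} {l : Filter ι} [l.NeBot]
    {c v : ι → ℝ} {a : ℝ} (ha : a ≤ 0) (hc : Tendsto c l (nhds a))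
    (hcv : ∀ᶠ i in l, c i ≤ v i) : a ≤ liminf v l := by
  by_cases hv : IsCoboundedUnder (· ≥ ·) l v
  · exact hc.liminf_eq ▸ liminf_le_liminf hcv hc.isBoundedUnder_ge hv
  · have : ¬BddAbove {a | ∀ᶠ x in map v l, a ≤ x} := fun ⟨w, hw⟩ => hv ⟨w, fun _ h => hw h⟩
    rwa [liminf, limsInf, Real.sSup_of_not_bddAbove this]

theorem liminf_penalization_nonneg_general
    {X : Type*} [MeasurableSpace X] (μ : Measure X) [IsFiniteMeasure μ]
    (B L : ℝ) (hB : 0 < B)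
    (b : X → ℝ) (hb_bdd : ∀ᵐ x ∂μ, 0 ≤ b x ∧ b x ≤ B)
    (u : X → ℝ)
    (hu1 : ∀ᵐ x ∂μ, 0 < b x → u x ≤ 1)
    (up : ℕ → X → ℝ)
    (hup_bdd : ∀ p, ∀ᵐ x ∂μ, 0 ≤ up p x ∧ up p x ≤ L) :
    0 ≤ Filter.atTop.liminf (fun p => ∫ x, b x * (up p x) ^ p * (up p x - u x) ∂μ) := by
  have hbound : ∀ p : ℕ, -(B / (p + 1)) * μ.real Set.univ ≤
      ∫ x, b x * (up p x) ^ p * (up p x - u x) ∂μ := fun p =>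
    mul_measureReal_univ_le_integral (by simp only [neg_nonpos]; positivity) <| by
      filter_upwards [hb_bdd, hu1, hup_bdd p] with x ⟨hb0, hbB⟩ hu ⟨ht, _⟩
      exact neg_div_succ_le_mul_pow_mul_sub p hb0 hbB ht hu
  have hlim : Tendsto (fun p : ℕ => -(B / (p + 1)) * μ.real Set.univ) atTop (nhds 0) := by
    simpa using ((tendsto_const_div_atTop_nhds_zero_nat B).comp
      (tendsto_add_atTop_nat 1)).neg.mul_const (μ.real Set.univ)
  exact Real.le_liminf_of_tendsto_of_eventually_le le_rfl hlim (Eventually.of_forall hbound)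

/-- Key lower-semicontinuity estimate from Lemma 2.5: if `0 ≤ b ≤ B` a.e., `u ≥ 0` a.e. with
`u ≤ 1` a.e. on `{b > 0}`, `0 ≤ u_p ≤ L` a.e., and `∫ |u_p − u| dμ → 0`, then
`liminf_p ∫ b · u_p^p · (u_p − u) dμ ≥ 0`. -/
theorem liminf_penalization_nonneg
    {X : Type*} [MeasurableSpace X] (μ : Measure X) [IsFiniteMeasure μ]
    (B L : ℝ) (hB : 0 < B) (hL : 0 < L)
    (b : X → ℝ) (hb_meas : Measurable b) (hb_bdd : ∀ᵐ x ∂μ, 0 ≤ b x ∧ b x ≤ B)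
    (u : X → ℝ) (hu_meas : Measurable u) (hu0 : ∀ᵐ x ∂μ, 0 ≤ u x)
    (hu1 : ∀ᵐ x ∂μ, 0 < b x → u x ≤ 1)
    (up : ℕ → X → ℝ) (hup_meas : ∀ p, Measurable (up p))
    (hup_bdd : ∀ p, ∀ᵐ x ∂μ, 0 ≤ up p x ∧ up p x ≤ L)
    (hconv : Tendsto (fun p => ∫ x, |up p x - u x| ∂μ) atTop (nhds 0)) :
    0 ≤ Filter.atTop.liminf (fun p => ∫ x, b x * (up p x) ^ p * (up p x - u x) ∂μ) :=
  liminf_penalization_nonneg_general μ B L hB b hb_bdd u hu1 up hup_bdd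
end
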